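/- Let A, B, C, D, X be bounded operators on a Hilbert space H with A*A ≤ C*C and BB* ≤ DD*. Then ‖AXB‖ ≤ ‖CXD‖ in the operator norm. -/

import Mathlib

open ContinuousLinearMap

section CStarAlgebra

variable {A : Type*} [NonUnitalCStarAlgebra A] [PartialOrder A] [StarOrderedRing A]

/-- The C⋆-identity gives `‖a * x‖ ^ 2 = ‖star x * (star a * a) * x‖`, and conjugation by `x`
and the norm are both monotone on positive elements. -/
lemma norm_mul_le_norm_mul_of_star_mul_self_le {a c : A} (h : star a * a ≤ star c * c) (x : A) :
    ‖a * x‖ ≤ ‖c * x‖ := by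
  have hconj : star x * (star a * a) * x ≤ star x * (star c * c) * x :=
    star_left_conjugate_le_conjugate h x
  have hsq : ‖a * x‖ * ‖a * x‖ ≤ ‖c * x‖ * ‖c * x‖ := by
    simpa only [← CStarRing.norm_star_mul_self, star_mul, mul_assoc] using
      CStarAlgebra.norm_le_norm_of_nonneg_of_le
        (star_left_conjugate_nonneg (star_mul_self_nonneg a) x) hconj
  exact (mul_self_le_mul_self_iff (norm_nonneg _) (norm_nonneg _)).mpr hsq

lemma norm_mul_le_norm_mul_of_mul_star_self_le {b d : A} (h : b * star b ≤ d * star d) (x : A) :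
    ‖x * b‖ ≤ ‖x * d‖ := by
  rw [← norm_star (x * b), ← norm_star (x * d), star_mul, star_mul]
  exact norm_mul_le_norm_mul_of_star_mul_self_le (by simpa only [star_star] using h) (star x)

lemma norm_mul_mul_le_norm_mul_mul {a b c d : A} (hac : star a * a ≤ star c * c)
    (hbd : b * star b ≤ d * star d) (x : A) : ‖a * x * b‖ ≤ ‖c * x * d‖ :=
  calc ‖a * x * b‖ = ‖a * (x * b)‖ := by rw [mul_assoc]
    _ ≤ ‖c * (x * b)‖ := norm_mul_le_norm_mul_of_star_mul_self_le hac _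
    _ = ‖c * x * b‖ := by rw [mul_assoc]
    _ ≤ ‖c * x * d‖ := norm_mul_le_norm_mul_of_mul_star_self_le hbd _

end CStarAlgebra

theorem double_monotonicity_operator_norm {H : Type*} [NormedAddCommGroup H]
    [InnerProductSpace ℂ H] [CompleteSpace H] (A B C D X : H →L[ℂ] H)
    (h1 : ((adjoint C ∘L C) - (adjoint A ∘L A)).IsPositive)
    (h2 : ((D ∘L adjoint D) - (B ∘L adjoint B)).IsPositive) :
    ‖A ∘L X ∘L B‖ ≤ ‖C ∘L X ∘L D‖ := by
  have hAC : star A * A ≤ star C * C := (le_def _ _).mpr h1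
  have hBD : B * star B ≤ D * star D := (le_def _ _).mpr h2
  simpa only [mul_def, comp_assoc] using norm_mul_mul_le_norm_mul_mul hAC hBD X
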